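/- Let q ≥ 4 be a real number, κ := 1/(√q − 1), and for ρ > 0 let B₁(ρ) := ((q+1)/q)·q^κ · inf{ r^{−ρ/2}·(1+r)·(1+√(qr))^{4κ} : 0 < r ≤ q^{−1/2} }. Let ρ₁ > 0 be the unique positive real with B₁(ρ₁) = q^{ρ₁}·(q+1)/(q−1). Then ρ₁ > 2q/(q²−1). -/

import Mathlib

/-!
Every `r ≤ q^{-1/2}` has `r^{-ρ/2} ≥ q^{ρ/4}` while the other two factors are at least `1`, so
`B₁(ρ) ≥ ((q+1)/q)·q^{κ+ρ/4}`. The defining equation of `ρ₁` then forces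
`q^{κ - 3ρ₁/4} ≤ q/(q-1)`. If `ρ₁ ≤ 2q/(q²-1)`, the exponent `κ - 3ρ₁/4` would exceed `1/(q-1)`
(because `κ = (√q+1)/(q-1)` and `√q ≥ 2`), and `q^x ≥ 1 + x log q > 1 + x` for `q > e` would give
`q^{κ - 3ρ₁/4} > q/(q-1)`.
-/

open Real Set

lemma rpow_neg_half_le_sInf_image {q t ρ a : ℝ} (ha : 0 < a) (ht : 0 ≤ t) (hρ : 0 ≤ ρ) :
    a ^ (-ρ / 2) ≤ sInf ((fun r : ℝ => r ^ (-ρ / 2) * (1 + r) * (1 + √(q * r)) ^ t) '' Ioc 0 a) := by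
  refine le_csInf ⟨_, mem_image_of_mem _ ⟨ha, le_rfl⟩⟩ ?_
  rintro _ ⟨r, ⟨hr0, hra⟩, rfl⟩
  have hpow : a ^ (-ρ / 2) ≤ r ^ (-ρ / 2) := rpow_le_rpow_of_nonpos hr0 hra (by linarith)
  have hsqrt : 1 ≤ (1 + √(q * r)) ^ t := one_le_rpow (by linarith [sqrt_nonneg (q * r)]) ht
  calc a ^ (-ρ / 2) = a ^ (-ρ / 2) * 1 * 1 := by ring
    _ ≤ r ^ (-ρ / 2) * (1 + r) * (1 + √(q * r)) ^ t := by gcongr; linarith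

lemma rpow_sub_le_div_sub_one {q κ ρ : ℝ} (hq : 1 < q)
    (h : (q + 1) / q * q ^ κ * q ^ (ρ / 4) ≤ q ^ ρ * (q + 1) / (q - 1)) :
    q ^ (κ - 3 / 4 * ρ) ≤ q / (q - 1) := by
  have hq0 : 0 < q := by linarith
  have hq1 : 0 < q - 1 := by linarith
  rw [show κ - 3 / 4 * ρ = κ + ρ / 4 - ρ by ring, rpow_sub hq0, rpow_add hq0,
    div_le_div_iff₀ (rpow_pos_of_pos hq0 ρ) hq1]
  rw [div_mul_eq_mul_div, div_mul_eq_mul_div, div_le_div_iff₀ hq0 hq1] at h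
  nlinarith [rpow_pos_of_pos hq0 ρ, rpow_pos_of_pos hq0 κ, rpow_pos_of_pos hq0 (ρ / 4)]

lemma div_sub_one_lt_rpow {q x : ℝ} (hq : exp 1 ≤ q) (hx : 1 / (q - 1) < x) :
    q / (q - 1) < q ^ x := by
  have hq1 : 0 < q - 1 := by linarith [add_one_le_exp 1]
  have hlog : 1 ≤ log q := by rwa [le_log_iff_exp_le (by linarith)]
  have hx0 : 0 < x := lt_trans (by positivity) hx
  calc q / (q - 1) = 1 + 1 / (q - 1) := by field_simp; ring
    _ < 1 + x * log q := by nlinarith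
    _ ≤ q ^ x := by
      rw [rpow_def_of_pos (by linarith), mul_comm]
      linarith [add_one_le_exp (log q * x)]

lemma inv_sub_one_add_lt_inv_sqrt_sub_one {q : ℝ} (hq : 4 ≤ q) :
    1 / (q - 1) + 3 / 4 * (2 * q / (q ^ 2 - 1)) < 1 / (√q - 1) := by
  obtain ⟨s, hs0, rfl⟩ : ∃ s, 0 ≤ s ∧ q = s ^ 2 := ⟨√q, sqrt_nonneg q, (sq_sqrt (by linarith)).symm⟩
  rw [sqrt_sq hs0]
  have hs : 2 ≤ s := by nlinarith
  have hs1 : s - 1 ≠ 0 := by linarith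
  have hq1 : s ^ 2 - 1 ≠ 0 := by nlinarith
  have hq2 : s ^ 2 + 1 ≠ 0 := by positivity
  have hgap : 1 / (s - 1) - (1 / (s ^ 2 - 1) + 3 / 4 * (2 * s ^ 2 / ((s ^ 2) ^ 2 - 1)))
      = (s * (s ^ 2 + 1) - 3 / 2 * s ^ 2) / ((s ^ 2 - 1) * (s ^ 2 + 1)) := by
    rw [show (s ^ 2) ^ 2 - 1 = (s ^ 2 - 1) * (s ^ 2 + 1) by ring]
    field_simp
    ring
  have hnum : 0 < s * (s ^ 2 + 1) - 3 / 2 * s ^ 2 := by nlinarith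
  have hden : 0 < (s ^ 2 - 1) * (s ^ 2 + 1) := mul_pos (by nlinarith) (by positivity)
  linarith [div_pos hnum hden]

/-- The individual-code threshold `ρ₁(q)` of Theorem 2 exceeds the average-code
threshold `2q/(q²−1)` of Theorem 1: if `ρ₁ > 0` satisfies
`B₁(ρ₁) = q^{ρ₁}·(q+1)/(q−1)`, then `ρ₁ > 2q/(q²−1)`. -/
theorem stmt_15 (q : ℝ) (hq : 4 ≤ q) (κ : ℝ) (hκ : κ = 1 / (Real.sqrt q - 1))
    (B₁ : ℝ → ℝ)
    (hB₁ : ∀ ρ : ℝ, B₁ ρ = (q + 1) / q * q ^ κ *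
      sInf ((fun r : ℝ =>
          r ^ (-ρ / 2) * (1 + r) * (1 + Real.sqrt (q * r)) ^ (4 * κ)) ''
        Set.Ioc 0 (q ^ (-(1 : ℝ) / 2))))
    (ρ₁ : ℝ) (hρ₁pos : 0 < ρ₁)
    (hρ₁ : B₁ ρ₁ = q ^ ρ₁ * (q + 1) / (q - 1)) :
    2 * q / (q ^ 2 - 1) < ρ₁ := by
  have hq0 : 0 < q := by linarith
  have hκ0 : 0 ≤ κ := by
    rw [hκ]; exact one_div_nonneg.2 (sub_nonneg.2 (one_le_sqrt.2 (by linarith)))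
  have hinf := rpow_neg_half_le_sInf_image (q := q) (rpow_pos_of_pos hq0 (-(1 : ℝ) / 2))
    (by positivity : 0 ≤ 4 * κ) hρ₁pos.le
  rw [← rpow_mul hq0.le, show -(1 : ℝ) / 2 * (-ρ₁ / 2) = ρ₁ / 4 by ring] at hinf
  have hB₁_ge : (q + 1) / q * q ^ κ * q ^ (ρ₁ / 4) ≤ q ^ ρ₁ * (q + 1) / (q - 1) := by
    rw [← hρ₁, hB₁]
    gcongr
  have hle : q ^ (κ - 3 / 4 * ρ₁) ≤ q / (q - 1) := rpow_sub_le_div_sub_one (by linarith) hB₁_ge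
  by_contra! hρ₁le
  have hexp : 1 / (q - 1) < κ - 3 / 4 * ρ₁ := by
    linarith [hκ ▸ inv_sub_one_add_lt_inv_sqrt_sub_one hq]
  exact (div_sub_one_lt_rpow (by linarith [exp_one_lt_d9]) hexp).not_ge hle
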